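/- arXiv:1509.01089 — 9 statements merged into one kernel-verified Lean document; each statement's English description precedes it below -/
import Mathlib

section
/- Let v : ℝ² → ℝ² have both components homogeneous quadratic forms (i.e. v(ω₁,ω₂) = (a₁ω₁²+b₁ω₁ω₂+c₁ω₂², a₂ω₁²+b₂ω₁ω₂+c₂ω₂²)), and let H be a positive definite quadratic form on ℝ² which is a first integral of ω̇ = v(ω), i.e. the derivative of H at ω applied to v(ω) vanishes for all ω ∈ ℝ². Then either v is identically zero, or the zero set {ω ∈ ℝ² : v(ω) = 0} is exactly a one-dimensional linear subspace of ℝ² (a single straight line of steady motions through the origin). -/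
/-!
Along `v` the derivative of `H` is `⟨∇H(ω), v(ω)⟩`, a cubic form that vanishes identically, with
`∇H(ω) = (2αω₁ + βω₂, βω₁ + 2γω₂)` a linear isomorphism since `H` is positive definite. Since the
two components of `∇H` are coprime linear forms, comparing coefficients forces `v = M · J∇H` for a
linear form `M`, where `J` is the rotation by a right angle. As `∇H` vanishes only at the origin,
the zeros of `v` are the zeros of `M`: the whole plane if `M = 0`, the line `ker M` otherwise.
-/

open Module

def binQuad (a b c : ℝ) (ω : ℝ × ℝ) : ℝ :=
  a * ω.1 ^ 2 + b * ω.1 * ω.2 + c * ω.2 ^ 2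

section BinQuad

variable {α β γ : ℝ}

theorem binQuad_coeffs_of_pos (h : ∀ ω : ℝ × ℝ, ω ≠ 0 → 0 < binQuad α β γ ω) :
    0 < α ∧ 0 < γ ∧ β ^ 2 < 4 * α * γ := by
  have hα : 0 < α := by simpa [binQuad] using h (1, 0) (by simp)
  have hγ : 0 < γ := by simpa [binQuad] using h (0, 1) (by simp)
  have hdisc := h (-β, 2 * α) (by simp [hα.ne'])
  simp only [binQuad] at hdisc
  exact ⟨hα, hγ, by nlinarith⟩

theorem hasFDerivAt_binQuad (α β γ : ℝ) (ω : ℝ × ℝ) :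
    HasFDerivAt (binQuad α β γ)
      ((2 * α * ω.1 + β * ω.2) • ContinuousLinearMap.fst ℝ ℝ ℝ +
        (β * ω.1 + 2 * γ * ω.2) • ContinuousLinearMap.snd ℝ ℝ ℝ) ω := by
  have hx := hasFDerivAt_fst (𝕜 := ℝ) (p := ω) (E := ℝ) (F := ℝ)
  have hy := hasFDerivAt_snd (𝕜 := ℝ) (p := ω) (E := ℝ) (F := ℝ)
  refine ((((hx.pow 2).const_mul α).add ((hx.const_mul β).mul hy)).add
    ((hy.pow 2).const_mul γ)).congr_fderiv ?_
  ext <;> simp <;> ring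

/-- The coefficients of `ω₁³, ω₁²ω₂, ω₁ω₂², ω₂³` in the cubic form of `h`. -/
theorem coeff_eqs_of_grad_orthogonal {a₁ b₁ c₁ a₂ b₂ c₂ : ℝ}
    (h : ∀ ω : ℝ × ℝ, (2 * α * ω.1 + β * ω.2) * binQuad a₁ b₁ c₁ ω +
      (β * ω.1 + 2 * γ * ω.2) * binQuad a₂ b₂ c₂ ω = 0) :
    2 * α * a₁ + β * a₂ = 0 ∧
    2 * α * b₁ + β * a₁ + β * b₂ + 2 * γ * a₂ = 0 ∧
    2 * α * c₁ + β * b₁ + β * c₂ + 2 * γ * b₂ = 0 ∧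
    β * c₁ + 2 * γ * c₂ = 0 := by
  have h10 := h (1, 0)
  have h01 := h (0, 1)
  have h11 := h (1, 1)
  have h1m := h (1, -1)
  simp only [binQuad] at h10 h01 h11 h1m
  refine ⟨by linear_combination h10, ?_, ?_, by linear_combination h01⟩
  · linear_combination h11 / 2 - h1m / 2 - h01
  · linear_combination h11 / 2 + h1m / 2 - h10

theorem exists_linear_factor_of_grad_orthogonal {a₁ b₁ c₁ a₂ b₂ c₂ : ℝ}
    (hα : α ≠ 0) (hγ : γ ≠ 0) (hD : 4 * α * γ - β ^ 2 ≠ 0)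
    (h : ∀ ω : ℝ × ℝ, (2 * α * ω.1 + β * ω.2) * binQuad a₁ b₁ c₁ ω +
      (β * ω.1 + 2 * γ * ω.2) * binQuad a₂ b₂ c₂ ω = 0) :
    ∃ p q : ℝ, ∀ ω : ℝ × ℝ,
      binQuad a₁ b₁ c₁ ω = (p * ω.1 + q * ω.2) * (β * ω.1 + 2 * γ * ω.2) ∧
      binQuad a₂ b₂ c₂ ω = -((p * ω.1 + q * ω.2) * (2 * α * ω.1 + β * ω.2)) := by
  obtain ⟨E₁, E₂, E₃, E₄⟩ := coeff_eqs_of_grad_orthogonal h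
  -- `p` and `q` are read off the `ω₁²` coefficient of `v₂` and the `ω₂²` coefficient of `v₁`.
  set p := -a₂ / (2 * α) with hp
  set q := c₁ / (2 * γ) with hq
  have ha₂ : a₂ = -(2 * α) * p := by rw [hp]; field_simp
  have hc₁ : c₁ = 2 * γ * q := by rw [hq]; field_simp
  have ha₁ : a₁ = β * p :=
    mul_left_cancel₀ (mul_ne_zero two_ne_zero hα) (by linear_combination E₁ - β * ha₂)
  have hc₂ : c₂ = -(β * q) :=
    mul_left_cancel₀ (mul_ne_zero two_ne_zero hγ) (by linear_combination E₄ - β * hc₁)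
  have hb₁ : b₁ = β * q + 2 * γ * p := mul_left_cancel₀ hD <| by
    linear_combination 2 * γ * (E₂ - β * ha₁ - 2 * γ * ha₂) - β * (E₃ - 2 * α * hc₁ - β * hc₂)
  have hb₂ : b₂ = -(2 * α * q + β * p) := mul_left_cancel₀ hD <| by
    linear_combination 2 * α * (E₃ - 2 * α * hc₁ - β * hc₂) - β * (E₂ - β * ha₁ - 2 * γ * ha₂)
  refine ⟨p, q, fun ω => ⟨?_, ?_⟩⟩ <;> simp only [binQuad]
  · linear_combination ω.1 ^ 2 * ha₁ + ω.1 * ω.2 * hb₁ + ω.2 ^ 2 * hc₁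
  · linear_combination ω.1 ^ 2 * ha₂ + ω.1 * ω.2 * hb₂ + ω.2 ^ 2 * hc₂

theorem eq_zero_of_grad_eq_zero (hD : 4 * α * γ - β ^ 2 ≠ 0) {x y : ℝ}
    (h₁ : 2 * α * x + β * y = 0) (h₂ : β * x + 2 * γ * y = 0) : x = 0 ∧ y = 0 := by
  constructor
  · exact (mul_eq_zero.1 (by linear_combination 2 * γ * h₁ - β * h₂ :
      (4 * α * γ - β ^ 2) * x = 0)).resolve_left hD
  · exact (mul_eq_zero.1 (by linear_combination 2 * α * h₂ - β * h₁ :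
      (4 * α * γ - β ^ 2) * y = 0)).resolve_left hD

theorem mul_rotGrad_eq_zero_iff (hD : 4 * α * γ - β ^ 2 ≠ 0) (p q : ℝ) (ω : ℝ × ℝ) :
    ((p * ω.1 + q * ω.2) * (β * ω.1 + 2 * γ * ω.2),
      -((p * ω.1 + q * ω.2) * (2 * α * ω.1 + β * ω.2))) = (0 : ℝ × ℝ) ↔
      p * ω.1 + q * ω.2 = 0 := by
  simp only [Prod.mk_eq_zero, neg_eq_zero, mul_eq_zero]
  refine ⟨fun ⟨h₂, h₁⟩ => ?_, fun h => ⟨.inl h, .inl h⟩⟩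
  by_contra hM
  obtain ⟨hx, hy⟩ := eq_zero_of_grad_eq_zero hD (h₁.resolve_left hM) (h₂.resolve_left hM)
  exact hM (by simp [hx, hy])

end BinQuad

theorem exists_finrank_eq_one_setOf_linear_eq_zero {p q : ℝ} (hpq : (p, q) ≠ 0) :
    ∃ ℓ : Submodule ℝ (ℝ × ℝ), finrank ℝ ℓ = 1 ∧
      {ω : ℝ × ℝ | p * ω.1 + q * ω.2 = 0} = (ℓ : Set (ℝ × ℝ)) := by
  let M : Dual ℝ (ℝ × ℝ) := p • LinearMap.fst ℝ ℝ ℝ + q • LinearMap.snd ℝ ℝ ℝ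
  have hM : M ≠ 0 := fun h => hpq <| by
    simpa [M] using And.intro (LinearMap.congr_fun h (1, 0)) (LinearMap.congr_fun h (0, 1))
  refine ⟨LinearMap.ker M, ?_, by ext ω; simp [M]⟩
  have := Dual.finrank_ker_add_one_of_ne_zero hM
  simp only [finrank_prod, finrank_self] at this
  omega

/-- If both components of `v : ℝ² → ℝ²` are homogeneous quadratic
forms and `H` is a positive definite quadratic form which is a first integral of
`ω̇ = v(ω)`, then either `v ≡ 0` or the zero set of `v` is exactly one
one-dimensional linear subspace of `ℝ²` (a single straight line of steady motions). -/
theorem suslov_slsm_dichotomy_dim_two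
    (a₁ b₁ c₁ a₂ b₂ c₂ α β γ : ℝ)
    (v : ℝ × ℝ → ℝ × ℝ)
    (hv : ∀ ω : ℝ × ℝ,
      v ω = (a₁ * ω.1 ^ 2 + b₁ * ω.1 * ω.2 + c₁ * ω.2 ^ 2,
             a₂ * ω.1 ^ 2 + b₂ * ω.1 * ω.2 + c₂ * ω.2 ^ 2))
    (H : ℝ × ℝ → ℝ)
    (hH : ∀ ω : ℝ × ℝ, H ω = α * ω.1 ^ 2 + β * ω.1 * ω.2 + γ * ω.2 ^ 2)
    (hpos : ∀ ω : ℝ × ℝ, ω ≠ 0 → 0 < H ω)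
    (hint : ∀ ω : ℝ × ℝ, fderiv ℝ H ω (v ω) = 0) :
    (∀ ω, v ω = 0) ∨
      ∃ ℓ : Submodule ℝ (ℝ × ℝ), Module.finrank ℝ ℓ = 1 ∧
        {ω : ℝ × ℝ | v ω = 0} = (ℓ : Set (ℝ × ℝ)) := by
  obtain rfl : H = binQuad α β γ := funext hH
  replace hv : ∀ ω, v ω = (binQuad a₁ b₁ c₁ ω, binQuad a₂ b₂ c₂ ω) := hv
  obtain ⟨hα, hγ, hdisc⟩ := binQuad_coeffs_of_pos hpos
  have hD : 4 * α * γ - β ^ 2 ≠ 0 := by linarith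
  have horth : ∀ ω : ℝ × ℝ, (2 * α * ω.1 + β * ω.2) * binQuad a₁ b₁ c₁ ω +
      (β * ω.1 + 2 * γ * ω.2) * binQuad a₂ b₂ c₂ ω = 0 := fun ω => by
    simpa [(hasFDerivAt_binQuad α β γ ω).fderiv, hv] using hint ω
  obtain ⟨p, q, hfac⟩ := exists_linear_factor_of_grad_orthogonal hα.ne' hγ.ne' hD horth
  have hzero : ∀ ω, v ω = 0 ↔ p * ω.1 + q * ω.2 = 0 := fun ω => by
    rw [hv, (hfac ω).1, (hfac ω).2, mul_rotGrad_eq_zero_iff hD]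
  by_cases hpq : (p, q) = 0
  · obtain ⟨rfl, rfl⟩ := Prod.mk_eq_zero.1 hpq
    exact .inl fun ω => (hzero ω).2 (by ring)
  · simp only [hzero]
    exact .inr (exists_finrank_eq_one_setOf_linear_eq_zero hpq)
end

section
/- Let p be even, v : ℝ^p → ℝ^p continuously differentiable and homogeneous of degree 2, and ω₀ ≠ 0 a steady state (v(ω₀) = 0) which is nondegenerate in the sense that 0 is a root of algebraic multiplicity exactly 1 of the characteristic polynomial of the Jacobian Dv(ω₀). Let s(ω) denote the number of roots (with multiplicity) of the characteristic polynomial of Dv(ω) with strictly negative real part, and define j(ω) = (−1)^{s(ω)}. Then the index of the straight line of steady motions through ω₀ vanishes: j(ω₀) + j(−ω₀) = 0. -/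
/-!
Degree-2 homogeneity makes `v` even, so `Dv(-ω₀) = -Dv(ω₀)` and `s(-ω₀)` counts the roots of
the characteristic polynomial of `Dv(ω₀)` with positive real part. Of its `p` roots, those on the
imaginary axis are the simple root `0` together with pairs of complex conjugates, an odd number;
as `p` is even, `s(ω₀) + s(-ω₀)` is odd.
-/

/-- The Jacobian matrix of a map `v : ℝᵖ → ℝᵖ` at a point `ω`. -/
noncomputable def jacobianMatrix {p : ℕ} (v : (Fin p → ℝ) → (Fin p → ℝ))
    (ω : Fin p → ℝ) : Matrix (Fin p) (Fin p) ℝ :=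
  Matrix.of fun i j => fderiv ℝ v ω (Pi.single j 1) i

open Classical in
/-- `s(ω)`: the number of roots (with multiplicity) of the characteristic polynomial
of the Jacobian `Dv(ω)` over `ℂ` with strictly negative real part. -/
noncomputable def stableCount {p : ℕ} (v : (Fin p → ℝ) → (Fin p → ℝ))
    (ω : Fin p → ℝ) : ℕ :=
  Multiset.card (((jacobianMatrix v ω).charpoly.aroots ℂ).filter fun z => z.re < 0)

open Polynomial ComplexConjugate

theorem Polynomial.map_conj_aroots_complex (P : ℝ[X]) :
    (P.aroots ℂ).map conj = P.aroots ℂ := by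
  have h : (P.map (algebraMap ℝ ℂ)).map (starRingEnd ℂ) = P.map (algebraMap ℝ ℂ) := by
    rw [Polynomial.map_map]
    congr 1
    exact RingHom.ext Complex.conj_ofReal
  rw [aroots_def, ← (IsAlgClosed.splits (P.map (algebraMap ℝ ℂ))).roots_map, h]

namespace Multiset

theorem card_eq_card_filter_lt_add_card_filter_eq_add_card_filter_gt {α β : Type*}
    [LinearOrder β] (s : Multiset α) (f : α → β) (c : β) :
    card s = card (s.filter (f · < c)) + card (s.filter (f · = c)) + card (s.filter (c < f ·)) := by
  induction s using Multiset.induction_on with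
  | empty => simp
  | cons a s ih =>
    rcases lt_trichotomy (f a) c with h | h | h
    · simp [h, h.ne, h.not_gt, ih]; omega
    · simp [h, ih]; omega
    · simp [h, h.ne', h.not_gt, ih]; omega

theorem filter_map_conj_of_map_conj_eq {s : Multiset ℂ} (hs : s.map conj = s)
    (P : ℂ → Prop) [DecidablePred P] (hP : ∀ z, P (conj z) ↔ P z) :
    (s.filter P).map conj = s.filter P := by
  conv_rhs => rw [← hs, filter_map]
  congr 2
  funext z
  exact propext (hP z).symm

theorem card_filter_im_neg_eq_card_filter_im_pos {s : Multiset ℂ} (hs : s.map conj = s) :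
    card (s.filter (·.im < 0)) = card (s.filter (0 < ·.im)) := by
  conv_lhs => rw [← hs, filter_map, card_map]
  congr 2
  funext z
  simp

theorem odd_card_filter_re_eq_zero {s : Multiset ℂ} (hs : s.map conj = s)
    (h0 : Odd (s.count 0)) : Odd (card (s.filter (·.re = 0))) := by
  set s₀ := s.filter (·.re = 0)
  have hs₀ : s₀.map conj = s₀ := filter_map_conj_of_map_conj_eq hs _ fun z => by simp
  have hreal : card (s₀.filter (·.im = 0)) = s.count 0 := by
    rw [filter_filter, count_eq_card_filter_eq]
    congr 2
    funext z
    simp [Complex.ext_iff, and_comm, eq_comm]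
  rw [card_eq_card_filter_lt_add_card_filter_eq_add_card_filter_gt s₀ Complex.im 0,
    card_filter_im_neg_eq_card_filter_im_pos hs₀, hreal, add_right_comm, ← two_mul]
  exact (even_two_mul _).add_odd h0

end Multiset

namespace Matrix

variable {n : Type*} [Fintype n] [DecidableEq n]

theorem charpoly_neg {R : Type*} [CommRing R] (A : Matrix n n R) :
    (-A).charpoly = (-1) ^ Fintype.card n * A.charpoly.comp (-X) := by
  have h : (compRingHom (-X)).mapMatrix (charmatrix A) = -charmatrix (-A) := by
    refine Matrix.ext fun i j => ?_
    by_cases hij : i = j <;> simp [hij]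
    ring
  rw [charpoly, charpoly, ← coe_compRingHom_apply, RingHom.map_det, h, det_neg, ← mul_assoc,
    ← mul_pow, neg_one_mul, neg_neg, one_pow, one_mul]

theorem roots_charpoly_neg {R : Type*} [CommRing R] [IsDomain R] (A : Matrix n n R) :
    (-A).charpoly.roots = A.charpoly.roots.map Neg.neg := by
  have hC : ((-1) ^ Fintype.card n : R[X]) = C ((-1) ^ Fintype.card n) := by simp
  rw [charpoly_neg, hC, roots_C_mul _ (pow_ne_zero _ (neg_ne_zero.2 one_ne_zero)),
    roots_comp_neg_X]

theorem aroots_charpoly_neg {R S : Type*} [CommRing R] [CommRing S] [IsDomain S] [Algebra R S]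
    (A : Matrix n n R) : (-A).charpoly.aroots S = (A.charpoly.aroots S).map Neg.neg := by
  rw [aroots_def, aroots_def, ← charpoly_map, ← charpoly_map, Matrix.map_neg _ (map_neg _),
    roots_charpoly_neg]

theorem odd_card_aroots_re_neg_add_card_aroots_re_pos (A : Matrix n n ℝ)
    (hn : Even (Fintype.card n)) (h0 : Odd ((A.charpoly.aroots ℂ).count 0)) :
    Odd (Multiset.card ((A.charpoly.aroots ℂ).filter (·.re < 0)) +
      Multiset.card ((A.charpoly.aroots ℂ).filter (0 < ·.re))) := by
  have hcard := (A.charpoly.aroots ℂ).card_eq_card_filter_lt_add_card_filter_eq_add_card_filter_gt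
    Complex.re 0
  rw [IsAlgClosed.card_aroots_eq_natDegree, charpoly_natDegree_eq_dim] at hcard
  have himag := Multiset.odd_card_filter_re_eq_zero A.charpoly.map_conj_aroots_complex h0
  grind

end Matrix

theorem jacobianMatrix_neg_of_even {p : ℕ} {v : (Fin p → ℝ) → (Fin p → ℝ)}
    (hv : ∀ ω, v (-ω) = v ω) (ω : Fin p → ℝ) :
    jacobianMatrix v (-ω) = -jacobianMatrix v ω := by
  have hcomp : v ∘ ContinuousLinearEquiv.neg ℝ = v := funext hv
  have h := (ContinuousLinearEquiv.neg ℝ (M := Fin p → ℝ)).comp_right_fderiv (f := v) (x := -ω)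
  rw [hcomp] at h
  ext i j
  simp [jacobianMatrix, h]

theorem stableCount_neg_of_even {p : ℕ} {v : (Fin p → ℝ) → (Fin p → ℝ)}
    (hv : ∀ ω, v (-ω) = v ω) (ω : Fin p → ℝ) :
    stableCount v (-ω) =
      Multiset.card (((jacobianMatrix v ω).charpoly.aroots ℂ).filter (0 < ·.re)) := by
  rw [stableCount, jacobianMatrix_neg_of_even hv, Matrix.aroots_charpoly_neg, Multiset.filter_map,
    Multiset.card_map]
  congr 2
  funext z
  simp

theorem neg_one_pow_add_neg_one_pow_of_odd_add {R : Type*} [Ring R] {a b : ℕ} (h : Odd (a + b)) :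
    (-1 : R) ^ a + (-1) ^ b = 0 := by
  rcases Nat.even_or_odd a with ha | ha
  · rw [ha.neg_one_pow, (Nat.odd_add'.mp h |>.mpr ha).neg_one_pow, add_neg_cancel]
  · rw [ha.neg_one_pow, (Nat.odd_add.mp h |>.mp ha).neg_one_pow, neg_add_cancel]

theorem index_of_slsm_vanishes_for_even_dimension_general
    (p : ℕ) (hp : Even p)
    (v : (Fin p → ℝ) → (Fin p → ℝ))
    (hhom : ∀ (c : ℝ) (ω : Fin p → ℝ), v (c • ω) = c ^ 2 • v ω)
    (ω₀ : Fin p → ℝ)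
    (hnd : Multiset.count 0 ((jacobianMatrix v ω₀).charpoly.aroots ℂ) = 1) :
    ((-1 : ℤ)) ^ stableCount v ω₀ + ((-1 : ℤ)) ^ stableCount v (-ω₀) = 0 := by
  have hv : ∀ ω, v (-ω) = v ω := fun ω => by simpa using hhom (-1) ω
  rw [stableCount_neg_of_even hv]
  refine neg_one_pow_add_neg_one_pow_of_odd_add ?_
  exact Matrix.odd_card_aroots_re_neg_add_card_aroots_re_pos
    (jacobianMatrix v ω₀) (by rwa [Fintype.card_fin]) (hnd ▸ odd_one)

/-- For even `p`, a `C¹` map `v : ℝᵖ → ℝᵖ` homogeneous of degree 2,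
and a nonzero nondegenerate steady state `ω₀` (i.e. `0` is a root of algebraic
multiplicity exactly one of the characteristic polynomial of `Dv(ω₀)`), the index of
the straight line of steady motions through `ω₀` vanishes:
`j(ω₀) + j(−ω₀) = 0`, where `j(ω) = (−1)^{s(ω)}`. -/
theorem index_of_slsm_vanishes_for_even_dimension
    (p : ℕ) (hp : Even p)
    (v : (Fin p → ℝ) → (Fin p → ℝ))
    (hcd : ContDiff ℝ 1 v)
    (hhom : ∀ (c : ℝ) (ω : Fin p → ℝ), v (c • ω) = c ^ 2 • v ω)
    (ω₀ : Fin p → ℝ) (hω₀ : ω₀ ≠ 0) (hss : v ω₀ = 0)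
    (hnd : Multiset.count 0 ((jacobianMatrix v ω₀).charpoly.aroots ℂ) = 1) :
    ((-1 : ℤ)) ^ stableCount v ω₀ + ((-1 : ℤ)) ^ stableCount v (-ω₀) = 0 :=
  index_of_slsm_vanishes_for_even_dimension_general p hp v hhom ω₀ hnd
end

section
/- Let I be a real symmetric positive definite 3×3 matrix and a ∈ ℝ³ a nonzero vector which is not an eigenvector of I (equivalently, a and Ia are linearly independent). Then for ω ∈ ℝ³ the following are equivalent: (i) ⟨a, ω⟩ = 0 and there exists λ ∈ ℝ with ω × (Iω) = λ·a; (ii) there exists μ ∈ ℝ with ω = μ·(a × Ia). That is, the steady-state solutions of the Suslov system are exactly the points of the line spanned by a × Ia. -/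
open Matrix

private lemma cross_cross_eq (u v w : Fin 3 → ℝ) :
    crossProduct u (crossProduct v w) = (u ⬝ᵥ w) • v - (u ⬝ᵥ v) • w := by
  ext i
  fin_cases i <;>
    simp [crossProduct, dotProduct, Fin.sum_univ_three] <;> ring

private lemma eq_smul_of_cross_eq_zero {u v : Fin 3 → ℝ} (hu : u ≠ 0)
    (h : crossProduct u v = 0) : ∃ μ : ℝ, v = μ • u := by
  have huu : u ⬝ᵥ u ≠ 0 := fun h0 => hu (dotProduct_self_eq_zero.mp h0)
  have key := cross_cross_eq u u v
  rw [h, map_zero] at key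
  have hdv : (u ⬝ᵥ v) • u = (u ⬝ᵥ u) • v := sub_eq_zero.mp key.symm
  refine ⟨(u ⬝ᵥ v) / (u ⬝ᵥ u), ?_⟩
  have hs : (u ⬝ᵥ u) • ((u ⬝ᵥ v / (u ⬝ᵥ u)) • u) = (u ⬝ᵥ u) • v := by
    rw [smul_smul, mul_div_cancel₀ _ huu, hdv]
  exact (smul_right_injective _ huu hs).symm

/-- Steady states of the Suslov system.  Let `I` be a symmetric
positive definite `3×3` inertia matrix and `a ≠ 0` a vector which is not an
eigenvector of `I` (so `a` and `Ia` are linearly independent).  Then `ω` satisfies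
the steady-state equations `⟨a, ω⟩ = 0` and `ω × (Iω) = λ a` (for some multiplier
`λ`) if and only if `ω` is a scalar multiple of `a × Ia`. -/
theorem suslov_steady_states
    (I : Matrix (Fin 3) (Fin 3) ℝ) (hsymm : I.IsSymm) (hpd : I.PosDef)
    (a : Fin 3 → ℝ) (ha : a ≠ 0)
    (hnotEig : LinearIndependent ℝ ![a, I.mulVec a])
    (ω : Fin 3 → ℝ) :
    (a ⬝ᵥ ω = 0 ∧ ∃ lam : ℝ, crossProduct ω (I.mulVec ω) = lam • a) ↔
      ∃ μ : ℝ, ω = μ • crossProduct a (I.mulVec a) := by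
  set b := crossProduct a (I.mulVec a) with hb
  have hbne : b ≠ 0 := crossProduct_ne_zero_iff_linearIndependent.mpr hnotEig
  -- symmetry of I at the level of dot products
  have hsymdot : ∀ x y : Fin 3 → ℝ, (I.mulVec x) ⬝ᵥ y = x ⬝ᵥ (I.mulVec y) := by
    intro x y
    rw [dotProduct_mulVec, ← mulVec_transpose, hsymm.eq]
  constructor
  · rintro ⟨haω, lam, hcross⟩
    by_cases hω0 : ω = 0
    · exact ⟨0, by simp [hω0]⟩
    -- key : a ⬝ᵥ I.mulVec ω = 0
    have hIaω : (I.mulVec a) ⬝ᵥ ω = 0 := by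
      by_cases hlam : lam = 0
      · rw [hlam, zero_smul] at hcross
        obtain ⟨c, hc⟩ := eq_smul_of_cross_eq_zero hω0 hcross
        rw [hsymdot, hc, dotProduct_smul, haω, smul_zero]
      · have h1 : (crossProduct ω (I.mulVec ω)) ⬝ᵥ (I.mulVec ω) = 0 := by
          rw [dotProduct_comm]
          exact dot_cross_self _ _
        rw [hcross, smul_dotProduct] at h1
        have h2 : a ⬝ᵥ I.mulVec ω = 0 := by
          rcases mul_eq_zero.mp h1 with h | h
          · exact absurd h hlam
          · exact h
        rw [hsymdot]; exact h2
    -- ω is orthogonal to a and I.mulVec a, hence ω × b = 0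
    have hcb : crossProduct ω b = 0 := by
      rw [hb, cross_cross_eq]
      have h1 : ω ⬝ᵥ I.mulVec a = 0 := by rw [dotProduct_comm]; exact hIaω
      have h2 : ω ⬝ᵥ a = 0 := by rw [dotProduct_comm]; exact haω
      rw [h1, h2]; simp
    have hbc : crossProduct b ω = 0 := by
      rw [← neg_eq_zero, cross_anticomm, hcb]
    exact eq_smul_of_cross_eq_zero hbne hbc
  · rintro ⟨μ, rfl⟩
    constructor
    · rw [dotProduct_smul, hb, dot_self_cross, smul_zero]
    · -- first : b × (I b) is a multiple of a
      have hIab : (I.mulVec a) ⬝ᵥ b = 0 := dot_cross_self _ _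
      have hacross : crossProduct a (crossProduct b (I.mulVec b)) = 0 := by
        rw [cross_cross_eq]
        have h1 : a ⬝ᵥ I.mulVec b = 0 := by rw [← hsymdot]; exact hIab
        have h2 : a ⬝ᵥ b = 0 := dot_self_cross _ _
        rw [h1, h2]; simp
      obtain ⟨lam0, hlam0⟩ := eq_smul_of_cross_eq_zero ha hacross
      refine ⟨μ * μ * lam0, ?_⟩
      have hmv : I.mulVec (μ • b) = μ • I.mulVec b := by
        rw [mulVec_smul]
      rw [hmv, LinearMap.map_smul₂, LinearMap.map_smul, hlam0, smul_smul, smul_smul]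
end

section
/- Let I be a real symmetric positive definite 3×3 matrix and a ∈ ℝ³ a nonzero eigenvector of I, i.e. Ia = ρa for some ρ ∈ ℝ. Let ω : ℝ → ℝ³ be differentiable and λ : ℝ → ℝ be such that I ω′(t) + ω(t) × (I ω(t)) = λ(t)·a and ⟨a, ω(t)⟩ = 0 for all t. Then ω is constant: ω(t) = ω(0) for all t. In particular, every motion of the Suslov top is a steady rotation in this case. -/
open Matrix

/-! Differentiating the constraint gives `⟨a, ω̇⟩ = 0`, and `a ⊥ Iω` because `a` is an eigenvector
of the symmetric `I`. So `ω̇`, `ω` and `Iω` all lie in the plane `a^⊥`, their triple product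
vanishes, and pairing the equation of motion with `ω̇` leaves `⟨ω̇, Iω̇⟩ = 0`, whence `ω̇ = 0` since
`I` is positive definite. -/

theorem HasDerivAt.const_dotProduct {n : Type*} [Fintype n] {ω : ℝ → n → ℝ} {ω' : n → ℝ}
    {t : ℝ} (h : HasDerivAt ω ω' t) (a : n → ℝ) :
    HasDerivAt (fun s => a ⬝ᵥ ω s) (a ⬝ᵥ ω') t := by
  simpa only [dotProduct] using
    HasDerivAt.fun_sum fun i _ => (hasDerivAt_pi.1 h i).const_mul (a i)

theorem dotProduct_deriv_eq_zero_of_forall_dotProduct_eq_zero {n : Type*} [Fintype n]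
    {ω : ℝ → n → ℝ} {a : n → ℝ} {t : ℝ} (hω : DifferentiableAt ℝ ω t)
    (hcon : ∀ s, a ⬝ᵥ ω s = 0) : a ⬝ᵥ deriv ω t = 0 := by
  have hconst : (fun s => a ⬝ᵥ ω s) = fun _ => 0 := funext hcon
  have h := hω.hasDerivAt.const_dotProduct a
  rw [hconst] at h
  exact h.unique (hasDerivAt_const t 0)

theorem Matrix.IsSymm.dotProduct_mulVec_of_mulVec_eq_smul {n R : Type*} [Fintype n]
    [CommSemiring R] {A : Matrix n n R} (hA : A.IsSymm) {a : n → R} {ρ : R}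
    (hEig : A *ᵥ a = ρ • a) (v : n → R) : a ⬝ᵥ A *ᵥ v = ρ * (a ⬝ᵥ v) := by
  rw [dotProduct_mulVec, ← mulVec_transpose, hA.eq, hEig, smul_dotProduct, smul_eq_mul]

-- `a` is a nonzero kernel vector of the matrix with rows `u, v, w`.
theorem triple_product_eq_zero_of_dotProduct_eq_zero {K : Type*} [Field K] {a u v w : Fin 3 → K}
    (ha : a ≠ 0) (hu : a ⬝ᵥ u = 0) (hv : a ⬝ᵥ v = 0) (hw : a ⬝ᵥ w = 0) :
    u ⬝ᵥ v ⨯₃ w = 0 := by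
  rw [triple_product_eq_det]
  refine exists_mulVec_eq_zero_iff.1 ⟨a, ha, ?_⟩
  ext i
  fin_cases i <;> simp [mulVec, dotProduct_comm, hu, hv, hw]

theorem Matrix.PosDef.eq_zero_of_mulVec_add_cross_eq_smul {I : Matrix (Fin 3) (Fin 3) ℝ}
    (hsymm : I.IsSymm) (hpd : I.PosDef) {a : Fin 3 → ℝ} (ha : a ≠ 0) {ρ : ℝ}
    (hEig : I *ᵥ a = ρ • a) {d w : Fin 3 → ℝ} {μ : ℝ} (hd : a ⬝ᵥ d = 0) (hw : a ⬝ᵥ w = 0)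
    (h : I *ᵥ d + w ⨯₃ (I *ᵥ w) = μ • a) : d = 0 := by
  have hIw : a ⬝ᵥ I *ᵥ w = 0 := by
    rw [hsymm.dotProduct_mulVec_of_mulVec_eq_smul hEig, hw, mul_zero]
  have htriple : d ⬝ᵥ w ⨯₃ (I *ᵥ w) = 0 :=
    triple_product_eq_zero_of_dotProduct_eq_zero ha hd hw hIw
  have hquad : d ⬝ᵥ I *ᵥ d = 0 := by
    have h' := congrArg (d ⬝ᵥ ·) h
    simpa only [dotProduct_add, htriple, add_zero, dotProduct_smul, dotProduct_comm d a, hd,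
      smul_zero] using h'
  by_contra hne
  simpa [hquad] using hpd.dotProduct_mulVec_pos hne

/-- If the constraint vector `a` of the Suslov system is an
eigenvector of the inertia tensor `I` (i.e. `Ia = ρ a`), then every solution of
`I ω̇ + ω × (Iω) = λ(t) a`, `⟨a, ω⟩ = 0` is constant: every motion of the Suslov
top is a steady rotation. -/
theorem suslov_eigenvector_case_all_motions_steady
    (I : Matrix (Fin 3) (Fin 3) ℝ) (hsymm : I.IsSymm) (hpd : I.PosDef)
    (a : Fin 3 → ℝ) (ha : a ≠ 0) (ρ : ℝ) (hEig : I.mulVec a = ρ • a)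
    (ω : ℝ → Fin 3 → ℝ) (lam : ℝ → ℝ)
    (hdiff : Differentiable ℝ ω)
    (heq : ∀ t : ℝ,
      I.mulVec (deriv ω t) + crossProduct (ω t) (I.mulVec (ω t)) = lam t • a)
    (hcon : ∀ t : ℝ, a ⬝ᵥ ω t = 0) :
    ∀ t : ℝ, ω t = ω 0 := by
  have hderiv : ∀ t, deriv ω t = 0 := fun t =>
    hpd.eq_zero_of_mulVec_add_cross_eq_smul hsymm ha hEig
      (dotProduct_deriv_eq_zero_of_forall_dotProduct_eq_zero (hdiff t) hcon) (hcon t) (heq t)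
  exact fun t => is_const_of_deriv_eq_zero hdiff hderiv t 0
end

section
/- Let I be a real symmetric positive definite 3×3 matrix and a ∈ ℝ³ a nonzero vector which is not an eigenvector of I. Let ω : ℝ → ℝ³ be continuously differentiable and λ : ℝ → ℝ be such that I ω′(t) + ω(t) × (I ω(t)) = λ(t)·a and ⟨a, ω(t)⟩ = 0 for all t ∈ ℝ, and assume ω(0) is not a steady state, i.e. ω(0) is not a scalar multiple of a × Ia. Then there exists a steady state ω₀ ∈ span(a × Ia), ω₀ ≠ 0, such that ω(t) → ω₀ as t → +∞ and ω(t) → −ω₀ as t → −∞. In other words, every non-stationary motion is an asymptotic transition from steady rotation with angular velocity −ω₀ to steady rotation with the same magnitude but opposite angular velocity ω₀. -/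
/-!
Along a solution the energy `⟨ω, Iω⟩` is conserved, so the trajectory is bounded. Put
`n = a × Ia`, `r = ⟨Ia, ω⟩` and `s = ⟨In, ω⟩`. The Lagrange identity gives `s' = r²`, so `s` is
monotone and bounded and converges at both ends; since the multiplier is a continuous function of
`ω`, `r'` is bounded too, and a Barbalat-type argument gives `r → 0` at both ends. As
`⟨In, a × Ia⟩ = ⟨n, In⟩ > 0`, the vectors `a, Ia, In` form a basis, and the coordinates
`(0, r, s)` of `ω` force `ω(t) → μ± n`. Energy conservation gives `μ₋² = μ₊²`, while `μ₋ = μ₊`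
would make `s` constant, hence `r ≡ 0` and `ω(0) ∥ n`, a steady state.
-/

open Matrix Filter Topology Set
open scoped NNReal

theorem HasDerivAt.dotProduct {ι : Type*} [Fintype ι] {f g : ℝ → ι → ℝ} {f' g' : ι → ℝ} {t : ℝ}
    (hf : HasDerivAt f f' t) (hg : HasDerivAt g g' t) :
    HasDerivAt (fun u => f u ⬝ᵥ g u) (f' ⬝ᵥ g t + f t ⬝ᵥ g') t := by
  have := HasDerivAt.fun_sum (u := Finset.univ) fun i _ =>
    (hasDerivAt_pi.1 hf i).fun_mul (hasDerivAt_pi.1 hg i)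
  rw [Finset.sum_add_distrib] at this
  exact this

theorem HasDerivAt.matrix_mulVec {ι : Type*} [Fintype ι] (M : Matrix ι ι ℝ) {f : ℝ → ι → ℝ}
    {f' : ι → ℝ} {t : ℝ} (hf : HasDerivAt f f' t) :
    HasDerivAt (fun u => M *ᵥ f u) (M *ᵥ f') t :=
  hasDerivAt_pi.2 fun i =>
    (hasDerivAt_const t (M i)).dotProduct hf |>.congr_deriv (by simp [mulVec])

theorem Matrix.IsSymm.dotProduct_mulVec_comm {ι R : Type*} [Fintype ι] [CommSemiring R]
    {M : Matrix ι ι R} (hM : M.IsSymm) (x y : ι → R) : x ⬝ᵥ M *ᵥ y = y ⬝ᵥ M *ᵥ x := by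
  rw [dotProduct_mulVec, ← mulVec_transpose, hM.eq, dotProduct_comm]

theorem Matrix.PosDef.isSymm {ι : Type*} [Fintype ι] {M : Matrix ι ι ℝ} (hM : M.PosDef) :
    M.IsSymm :=
  (conjTranspose_eq_transpose_of_trivial M).symm.trans hM.isHermitian

theorem mul_le_sub_of_hasDerivAt_sq {s r : ℝ → ℝ} {K : ℝ≥0} (hs : ∀ t, HasDerivAt s (r t ^ 2) t)
    (hr : LipschitzWith K r) {t δ ε : ℝ} (hδ : 0 ≤ δ) (hKδ : K * δ ≤ ε / 2) (hrt : ε ≤ |r t|) :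
    (ε / 2) ^ 2 * δ ≤ s (t + δ) - s t := by
  have hd : Differentiable ℝ s := fun t => (hs t).differentiableAt
  have hε : 0 ≤ ε / 2 := (mul_nonneg K.2 hδ).trans hKδ
  have hderiv : ∀ u ∈ Icc t (t + δ), (ε / 2) ^ 2 ≤ deriv s u := by
    intro u ⟨htu, hut⟩
    have hdist : |r u - r t| ≤ ε / 2 := by
      have := hr.dist_le_mul u t
      rw [Real.dist_eq, Real.dist_eq, abs_of_nonneg (sub_nonneg.2 htu)] at this
      nlinarith [K.2]
    rw [(hs u).deriv, ← sq_abs (r u)]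
    gcongr
    linarith [abs_sub_abs_le_abs_sub (r t) (r u), abs_sub_comm (r t) (r u)]
  simpa using (convex_Icc t (t + δ)).mul_sub_le_image_sub_of_le_deriv hd.continuous.continuousOn
    hd.differentiableOn (fun u hu => hderiv u (interior_subset hu))
    t (left_mem_Icc.2 (by linarith)) (t + δ) (right_mem_Icc.2 (by linarith)) (by linarith)

theorem tendsto_atTop_zero_of_hasDerivAt_sq {s r : ℝ → ℝ} {K : ℝ≥0}
    (hs : ∀ t, HasDerivAt s (r t ^ 2) t) (hr : LipschitzWith K r) (hbdd : BddAbove (range s)) :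
    Tendsto r atTop (𝓝 0) := by
  have hlim := tendsto_atTop_ciSup (monotone_of_hasDerivAt_nonneg hs fun t => sq_nonneg _) hbdd
  rw [Metric.tendsto_nhds]
  intro ε hε
  set δ := ε / (2 * (K + 1))
  have hδ : 0 < δ := by positivity
  have hKδ : K * δ ≤ ε / 2 := by
    have : (K + 1 : ℝ) * δ = ε / 2 := by simp only [δ]; field_simp
    nlinarith
  have hinc : Tendsto (fun t => s (t + δ) - s t) atTop (𝓝 0) := by
    simpa using (hlim.comp (tendsto_atTop_add_const_right _ δ tendsto_id)).sub hlim
  filter_upwards [hinc.eventually (gt_mem_nhds (by positivity : 0 < (ε / 2) ^ 2 * δ))] with t ht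
  rw [Real.dist_0_eq_abs]
  by_contra! hrt
  linarith [mul_le_sub_of_hasDerivAt_sq hs hr hδ.le hKδ hrt]

theorem tendsto_atBot_zero_of_hasDerivAt_sq {s r : ℝ → ℝ} {K : ℝ≥0}
    (hs : ∀ t, HasDerivAt s (r t ^ 2) t) (hr : LipschitzWith K r) (hbdd : BddBelow (range s)) :
    Tendsto r atBot (𝓝 0) := by
  have hs' : ∀ t, HasDerivAt (fun u => -s (-u)) (r (-t) ^ 2) t := fun t => by
    have := ((hs (-t)).comp t (hasDerivAt_neg t)).neg
    rwa [mul_neg_one, neg_neg] at this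
  have hr' : LipschitzWith K (fun u => r (-u)) := by
    simpa [Function.comp_def] using hr.comp LipschitzWith.id.neg
  have hbdd' : BddAbove (range fun u => -s (-u)) := by
    obtain ⟨B, hB⟩ := hbdd
    exact ⟨-B, by rintro _ ⟨u, rfl⟩; simpa using hB (mem_range_self (-u))⟩
  simpa [Function.comp_def] using
    (tendsto_atTop_zero_of_hasDerivAt_sq hs' hr' hbdd').comp tendsto_neg_atBot_atTop

theorem exists_eq_smul_cross_of_dotProduct_eq_zero {K : Type*} [Field K] {a b v : Fin 3 → K}
    (hab : a ⨯₃ b ≠ 0) (ha : a ⬝ᵥ v = 0) (hb : b ⬝ᵥ v = 0) : ∃ μ : K, v = μ • a ⨯₃ b := by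
  have hcross : a ⨯₃ b ⨯₃ v = 0 := by simp [cross_cross_eq_smul_sub_smul, ha, hb]
  by_contra! hv
  exact crossProduct_ne_zero_iff_linearIndependent.2
    ((LinearIndependent.pair_iff' hab).2 fun μ => (hv μ).symm) hcross

theorem tendsto_smul_cross_of_tendsto_dotProduct {ι : Type*} {l : Filter ι} {a b c : Fin 3 → ℝ}
    {v : ι → Fin 3 → ℝ} {σ : ℝ} (habc : c ⬝ᵥ a ⨯₃ b ≠ 0)
    (ha : Tendsto (fun i => a ⬝ᵥ v i) l (𝓝 0)) (hb : Tendsto (fun i => b ⬝ᵥ v i) l (𝓝 0))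
    (hc : Tendsto (fun i => c ⬝ᵥ v i) l (𝓝 σ)) :
    Tendsto v l (𝓝 ((σ / c ⬝ᵥ a ⨯₃ b) • a ⨯₃ b)) := by
  set B : Matrix (Fin 3) (Fin 3) ℝ := ![c, a, b]
  have hB : IsUnit B.det := by
    rw [← triple_product_eq_det]
    exact habc.isUnit
  have hBv : Tendsto (fun i => B *ᵥ v i) l (𝓝 (B *ᵥ (σ / c ⬝ᵥ a ⨯₃ b) • a ⨯₃ b)) := by
    refine tendsto_pi_nhds.2 fun j => ?_
    fin_cases j
    · simpa [B, mulVec, habc] using hc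
    · simpa [B, mulVec, dot_self_cross] using ha
    · simpa [B, mulVec, dot_cross_self] using hb
  simpa [Function.comp_def, mulVec_mulVec, nonsing_inv_mul _ hB] using
    (((continuous_const (y := B⁻¹)).matrix_mulVec continuous_id).tendsto _).comp hBv

theorem Matrix.PosDef.exists_pos_mul_sq_norm_le {ι : Type*} [Fintype ι] {M : Matrix ι ι ℝ}
    (hM : M.PosDef) : ∃ m > 0, ∀ v : ι → ℝ, m * ‖v‖ ^ 2 ≤ v ⬝ᵥ M *ᵥ v := by
  have hQ : Continuous fun v : ι → ℝ => v ⬝ᵥ M *ᵥ v := by fun_prop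
  obtain ⟨m, hm, hmin⟩ := (isCompact_sphere (0 : ι → ℝ) 1).exists_forall_le' hQ.continuousOn
    fun u hu => by simpa using hM.dotProduct_mulVec_pos (ne_zero_of_mem_unit_sphere ⟨u, hu⟩)
  refine ⟨m, hm, fun v => ?_⟩
  rcases eq_or_ne v 0 with rfl | hv
  · simp
  have hnorm : 0 < ‖v‖ := norm_pos_iff.2 hv
  have := hmin (‖v‖⁻¹ • v) (by simp [norm_smul, hnorm.ne'])
  rw [mulVec_smul, dotProduct_smul, smul_dotProduct, smul_eq_mul, smul_eq_mul, ← mul_assoc,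
    ← mul_inv, ← sq, inv_mul_eq_div, le_div_iff₀ (by positivity)] at this
  exact this

theorem Matrix.PosDef.isCompact_setOf_dotProduct_mulVec_le {ι : Type*} [Fintype ι]
    {M : Matrix ι ι ℝ} (hM : M.PosDef) (C : ℝ) : IsCompact {v : ι → ℝ | v ⬝ᵥ M *ᵥ v ≤ C} := by
  obtain ⟨m, hm, hcoer⟩ := hM.exists_pos_mul_sq_norm_le
  refine Metric.isCompact_of_isClosed_isBounded (isClosed_le (by fun_prop) continuous_const)
    ((Metric.isBounded_closedBall (x := 0) (r := √(C / m))).subset ?_)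
  intro v hv
  rw [Metric.mem_closedBall, dist_zero_right]
  refine Real.le_sqrt_of_sq_le ?_
  rw [le_div_iff₀ hm]
  linarith [hcoer v, show v ⬝ᵥ M *ᵥ v ≤ C from hv]

namespace Suslov

structure IsSolution (I : Matrix (Fin 3) (Fin 3) ℝ) (a : Fin 3 → ℝ) (ω : ℝ → Fin 3 → ℝ)
    (lam : ℝ → ℝ) : Prop where
  differentiable : Differentiable ℝ ω
  eq : ∀ t, I *ᵥ deriv ω t + ω t ⨯₃ (I *ᵥ ω t) = lam t • a
  constraint : ∀ t, a ⬝ᵥ ω t = 0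

namespace IsSolution

variable {I : Matrix (Fin 3) (Fin 3) ℝ} {a : Fin 3 → ℝ} {ω : ℝ → Fin 3 → ℝ} {lam : ℝ → ℝ}

theorem hasDerivAt (h : IsSolution I a ω lam) (t : ℝ) : HasDerivAt ω (deriv ω t) t :=
  (h.differentiable t).hasDerivAt

theorem mulVec_deriv (h : IsSolution I a ω lam) (t : ℝ) :
    I *ᵥ deriv ω t = lam t • a - ω t ⨯₃ (I *ᵥ ω t) :=
  eq_sub_of_add_eq (h.eq t)

theorem dotProduct_deriv (h : IsSolution I a ω lam) (t : ℝ) : a ⬝ᵥ deriv ω t = 0 := by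
  have hconst : HasDerivAt (fun u => a ⬝ᵥ ω u) 0 t := by
    simpa only [h.constraint] using hasDerivAt_const t (0 : ℝ)
  simpa using ((hasDerivAt_const t a).dotProduct (h.hasDerivAt t)).unique hconst

theorem energy_eq (h : IsSolution I a ω lam) (hI : I.IsSymm) (t : ℝ) :
    ω t ⬝ᵥ I *ᵥ ω t = ω 0 ⬝ᵥ I *ᵥ ω 0 := by
  have hderiv : ∀ u, HasDerivAt (fun u => ω u ⬝ᵥ I *ᵥ ω u) 0 u := fun u => by
    have := (h.hasDerivAt u).dotProduct ((h.hasDerivAt u).matrix_mulVec I)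
    rwa [hI.dotProduct_mulVec_comm (deriv ω u), h.mulVec_deriv, dotProduct_sub, dotProduct_smul,
      dotProduct_comm (ω u) a, h.constraint, dot_self_cross, smul_zero, sub_zero, add_zero] at this
  exact is_const_of_deriv_eq_zero (fun u => (hderiv u).differentiableAt)
    (fun u => (hderiv u).deriv) t 0

theorem energy_eq_of_tendsto (h : IsSolution I a ω lam) (hI : I.IsSymm) {l : Filter ℝ} [l.NeBot]
    {v : Fin 3 → ℝ} (hv : Tendsto ω l (𝓝 v)) : v ⬝ᵥ I *ᵥ v = ω 0 ⬝ᵥ I *ᵥ ω 0 := by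
  have hQ : Tendsto (fun t => ω t ⬝ᵥ I *ᵥ ω t) l (𝓝 (v ⬝ᵥ I *ᵥ v)) :=
    ((show Continuous fun x : Fin 3 → ℝ => x ⬝ᵥ I *ᵥ x by fun_prop).tendsto v).comp hv
  simp only [h.energy_eq hI] at hQ
  exact tendsto_nhds_unique hQ tendsto_const_nhds

theorem hasDerivAt_mulVec_cross_dotProduct (h : IsSolution I a ω lam) (hI : I.IsSymm) (t : ℝ) :
    HasDerivAt (fun t => I *ᵥ (a ⨯₃ (I *ᵥ a)) ⬝ᵥ ω t) ((I *ᵥ a ⬝ᵥ ω t) ^ 2) t := by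
  have hval : a ⨯₃ (I *ᵥ a) ⬝ᵥ I *ᵥ deriv ω t = (I *ᵥ a ⬝ᵥ ω t) ^ 2 := by
    rw [h.mulVec_deriv, dotProduct_sub, dotProduct_smul, dotProduct_comm _ a, dot_self_cross,
      cross_dot_cross, h.constraint, hI.dotProduct_mulVec_comm a, dotProduct_comm (ω t)]
    simp only [smul_zero]
    ring
  have := (hasDerivAt_const t (I *ᵥ (a ⨯₃ (I *ᵥ a)))).dotProduct (h.hasDerivAt t)
  rwa [zero_dotProduct, zero_add, dotProduct_comm, hI.dotProduct_mulVec_comm, hval] at this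

theorem hasDerivAt_mulVec_dotProduct (h : IsSolution I a ω lam) (hI : I.IsSymm) (t : ℝ) :
    HasDerivAt (fun t => I *ᵥ a ⬝ᵥ ω t) (lam t * (a ⬝ᵥ a) - a ⬝ᵥ ω t ⨯₃ (I *ᵥ ω t)) t := by
  have := (hasDerivAt_const t (I *ᵥ a)).dotProduct (h.hasDerivAt t)
  rwa [zero_dotProduct, zero_add, dotProduct_comm, hI.dotProduct_mulVec_comm, h.mulVec_deriv,
    dotProduct_sub, dotProduct_smul, smul_eq_mul] at this

theorem multiplier_eq (h : IsSolution I a ω lam) (hI : IsUnit I.det)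
    (ha : a ⬝ᵥ I⁻¹ *ᵥ a ≠ 0) (t : ℝ) :
    lam t = a ⬝ᵥ I⁻¹ *ᵥ (ω t ⨯₃ (I *ᵥ ω t)) / (a ⬝ᵥ I⁻¹ *ᵥ a) := by
  -- pairing the equation with `I⁻¹ a` removes `ω'`, which is orthogonal to `a`
  have := congrArg (fun v => a ⬝ᵥ I⁻¹ *ᵥ v) (h.eq t)
  simp only [mulVec_add, mulVec_smul, mulVec_mulVec, nonsing_inv_mul _ hI, one_mulVec,
    dotProduct_add, dotProduct_smul, h.dotProduct_deriv, zero_add, smul_eq_mul] at this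
  rw [eq_div_iff ha, this]

theorem isBounded_range_comp (h : IsSolution I a ω lam) (hpd : I.PosDef) {X : Type*}
    [PseudoMetricSpace X] {f : (Fin 3 → ℝ) → X} (hf : Continuous f) :
    Bornology.IsBounded (range fun t => f (ω t)) := by
  have hK := hpd.isCompact_setOf_dotProduct_mulVec_le (ω 0 ⬝ᵥ I *ᵥ ω 0)
  refine ((hK.image hf).isBounded).subset ?_
  rintro _ ⟨t, rfl⟩
  exact mem_image_of_mem f (h.energy_eq hpd.isSymm t).le

theorem exists_lipschitzWith_mulVec_dotProduct (h : IsSolution I a ω lam) (hpd : I.PosDef)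
    (ha : a ≠ 0) : ∃ K, LipschitzWith K fun t => I *ᵥ a ⬝ᵥ ω t := by
  have hI : IsUnit I.det := (isUnit_iff_isUnit_det I).1 hpd.isUnit
  have hβ : a ⬝ᵥ I⁻¹ *ᵥ a ≠ 0 := by simpa using (hpd.inv.dotProduct_mulVec_pos ha).ne'
  set g := fun v : Fin 3 → ℝ =>
    a ⬝ᵥ I⁻¹ *ᵥ (v ⨯₃ (I *ᵥ v)) / (a ⬝ᵥ I⁻¹ *ᵥ a) * (a ⬝ᵥ a) - a ⬝ᵥ v ⨯₃ (I *ᵥ v)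
  have hderiv (t : ℝ) : HasDerivAt (fun t => I *ᵥ a ⬝ᵥ ω t) (g (ω t)) t := by
    have := h.hasDerivAt_mulVec_dotProduct hpd.isSymm t
    rwa [h.multiplier_eq hI hβ t] at this
  obtain ⟨C, hC⟩ :=
    isBounded_iff_forall_norm_le.1 (h.isBounded_range_comp hpd (f := g) (by fun_prop))
  refine ⟨C.toNNReal, lipschitzWith_of_nnnorm_deriv_le (fun t => (hderiv t).differentiableAt)
    fun t => ?_⟩
  rw [(hderiv t).deriv, ← NNReal.coe_le_coe, coe_nnnorm]
  exact (hC _ (mem_range_self t)).trans (Real.le_coe_toNNReal C)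

theorem exists_tendsto_smul_cross (h : IsSolution I a ω lam) (hpd : I.PosDef)
    (hn : a ⨯₃ (I *ᵥ a) ≠ 0) :
    ∃ μ ν : ℝ, Tendsto ω atTop (𝓝 (μ • a ⨯₃ (I *ᵥ a))) ∧
      Tendsto ω atBot (𝓝 (ν • a ⨯₃ (I *ᵥ a))) := by
  have ha : a ≠ 0 := by rintro rfl; simp at hn
  have hs := h.hasDerivAt_mulVec_cross_dotProduct hpd.isSymm
  obtain ⟨K, hK⟩ := h.exists_lipschitzWith_mulVec_dotProduct hpd ha
  have hbdd := h.isBounded_range_comp hpd (f := fun v => I *ᵥ (a ⨯₃ (I *ᵥ a)) ⬝ᵥ v) (by fun_prop)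
  have hmono := monotone_of_hasDerivAt_nonneg hs fun t => sq_nonneg _
  have hκ : I *ᵥ (a ⨯₃ (I *ᵥ a)) ⬝ᵥ a ⨯₃ (I *ᵥ a) ≠ 0 := by
    rw [dotProduct_comm]
    simpa using (hpd.dotProduct_mulVec_pos hn).ne'
  have ha₀ (l : Filter ℝ) : Tendsto (fun t => a ⬝ᵥ ω t) l (𝓝 0) := by
    simp only [h.constraint, tendsto_const_nhds]
  exact ⟨_, _,
    tendsto_smul_cross_of_tendsto_dotProduct hκ (ha₀ _)
      (tendsto_atTop_zero_of_hasDerivAt_sq hs hK hbdd.bddAbove)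
      (tendsto_atTop_ciSup hmono hbdd.bddAbove),
    tendsto_smul_cross_of_tendsto_dotProduct hκ (ha₀ _)
      (tendsto_atBot_zero_of_hasDerivAt_sq hs hK hbdd.bddBelow)
      (tendsto_atBot_ciInf hmono hbdd.bddBelow)⟩

theorem exists_eq_smul_cross_of_tendsto (h : IsSolution I a ω lam) (hI : I.IsSymm)
    (hn : a ⨯₃ (I *ᵥ a) ≠ 0) {v : Fin 3 → ℝ} (htop : Tendsto ω atTop (𝓝 v))
    (hbot : Tendsto ω atBot (𝓝 v)) : ∃ μ : ℝ, ω 0 = μ • a ⨯₃ (I *ᵥ a) := by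
  have hs := h.hasDerivAt_mulVec_cross_dotProduct hI
  set c := I *ᵥ (a ⨯₃ (I *ᵥ a))
  have hmono := monotone_of_hasDerivAt_nonneg hs fun t => sq_nonneg _
  have hcont : Continuous fun x : Fin 3 → ℝ => c ⬝ᵥ x := by fun_prop
  have hconst (t : ℝ) : c ⬝ᵥ ω t = c ⬝ᵥ v :=
    le_antisymm (hmono.ge_of_tendsto ((hcont.tendsto v).comp htop) t)
      (hmono.le_of_tendsto ((hcont.tendsto v).comp hbot) t)
  have hr : I *ᵥ a ⬝ᵥ ω 0 = 0 := by
    refine pow_eq_zero_iff two_ne_zero |>.1 ((hs 0).unique ?_)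
    simpa only [hconst] using hasDerivAt_const (0 : ℝ) (c ⬝ᵥ v)
  exact exists_eq_smul_cross_of_dotProduct_eq_zero hn (h.constraint 0) hr

end IsSolution

end Suslov

theorem suslov_asymptotic_reversal_general
    (I : Matrix (Fin 3) (Fin 3) ℝ) (hpd : I.PosDef)
    (a : Fin 3 → ℝ)
    (hnotEig : LinearIndependent ℝ ![a, I.mulVec a])
    (ω : ℝ → Fin 3 → ℝ) (lam : ℝ → ℝ)
    (hcd : ContDiff ℝ 1 ω)
    (heq : ∀ t : ℝ,
      I.mulVec (deriv ω t) + crossProduct (ω t) (I.mulVec (ω t)) = lam t • a)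
    (hcon : ∀ t : ℝ, a ⬝ᵥ ω t = 0)
    (hns : ¬ ∃ μ : ℝ, ω 0 = μ • crossProduct a (I.mulVec a)) :
    ∃ ω₀ : Fin 3 → ℝ, ω₀ ≠ 0 ∧ (∃ μ : ℝ, ω₀ = μ • crossProduct a (I.mulVec a)) ∧
      Tendsto ω atTop (nhds ω₀) ∧ Tendsto ω atBot (nhds (-ω₀)) := by
  have h : Suslov.IsSolution I a ω lam := ⟨hcd.differentiable one_ne_zero, heq, hcon⟩
  have hn : a ⨯₃ (I *ᵥ a) ≠ 0 := crossProduct_ne_zero_iff_linearIndependent.2 hnotEig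
  obtain ⟨μ, ν, htop, hbot⟩ := h.exists_tendsto_smul_cross hpd hn
  have hne : μ ≠ ν := by
    rintro rfl
    exact hns (h.exists_eq_smul_cross_of_tendsto hpd.isSymm hn htop hbot)
  have hsq : ν ^ 2 = μ ^ 2 := by
    have hκ := hpd.dotProduct_mulVec_pos hn
    have henergy := (h.energy_eq_of_tendsto hpd.isSymm hbot).trans
      (h.energy_eq_of_tendsto hpd.isSymm htop).symm
    simp only [mulVec_smul, dotProduct_smul, smul_dotProduct, smul_eq_mul, star_trivial]
      at henergy hκ
    rw [← mul_assoc, ← mul_assoc] at henergy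
    simpa [sq] using mul_right_cancel₀ hκ.ne' henergy
  have hμ : ν = -μ := (sq_eq_sq_iff_eq_or_eq_neg.1 hsq).resolve_left hne.symm
  refine ⟨μ • a ⨯₃ (I *ᵥ a), smul_ne_zero ?_ hn, ⟨μ, rfl⟩, htop, ?_⟩
  · rintro rfl
    simp [hμ] at hne
  · rwa [← neg_smul, ← hμ]

/-- Reversal in the Suslov system.  Let `a ≠ 0` not be an
eigenvector of the inertia tensor `I` and let `ω : ℝ → ℝ³` be a `C¹` solution of
`I ω̇ + ω × (Iω) = λ(t) a`, `⟨a, ω⟩ = 0`, whose initial condition is not a steady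
state (not a multiple of `a × Ia`).  Then there is a nonzero steady state
`ω₀ ∈ span(a × Ia)` with `ω(t) → ω₀` as `t → +∞` and `ω(t) → −ω₀` as `t → −∞`. -/
theorem suslov_asymptotic_reversal
    (I : Matrix (Fin 3) (Fin 3) ℝ) (hsymm : I.IsSymm) (hpd : I.PosDef)
    (a : Fin 3 → ℝ) (ha : a ≠ 0)
    (hnotEig : LinearIndependent ℝ ![a, I.mulVec a])
    (ω : ℝ → Fin 3 → ℝ) (lam : ℝ → ℝ)
    (hcd : ContDiff ℝ 1 ω)
    (heq : ∀ t : ℝ,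
      I.mulVec (deriv ω t) + crossProduct (ω t) (I.mulVec (ω t)) = lam t • a)
    (hcon : ∀ t : ℝ, a ⬝ᵥ ω t = 0)
    (hns : ¬ ∃ μ : ℝ, ω 0 = μ • crossProduct a (I.mulVec a)) :
    ∃ ω₀ : Fin 3 → ℝ, ω₀ ≠ 0 ∧ (∃ μ : ℝ, ω₀ = μ • crossProduct a (I.mulVec a)) ∧
      Tendsto ω atTop (nhds ω₀) ∧ Tendsto ω atBot (nhds (-ω₀)) :=
  suslov_asymptotic_reversal_general I hpd a hnotEig ω lam hcd heq hcon hns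
end

section
/- Let m > 0, J₀ > 0, k > 0 and ξ, η ∈ ℝ, and set J = J₀ + m(ξ² + η²). Suppose u, v, ω : ℝ → ℝ are differentiable and satisfy the Carathéodory viscous-friction equations: u̇ − η ω̇ = ωv + ξω², v̇ + ξ ω̇ = −ωu + ηω² − (k/m)v, and (J/m) ω̇ + ξ v̇ − η u̇ = −ω(ξu + ηv) for all t. Then the kinetic energy T(t) = (m/2)·((u − ωη)² + (v + ωξ)²) + (J₀/2)·ω² satisfies T′(t) = −k·v(t)² for all t; in particular T is nonincreasing and energy does not dissipate exactly when v = 0. -/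
/-- Energy dissipation in Carathéodory's viscous-friction model
of the Chaplygin sleigh.  If `u, v, ω` satisfy
`u̇ − η ω̇ = ωv + ξω²`, `v̇ + ξ ω̇ = −ωu + ηω² − (k/m) v`,
`(J/m) ω̇ + ξ v̇ − η u̇ = −ω(ξu + ηv)` with `J = J₀ + m(ξ² + η²)`, then the kinetic
energy `T = (m/2)((u − ωη)² + (v + ωξ)²) + (J₀/2)ω²` satisfies `T′ = −k v²`; in
particular `T` is nonincreasing, and the energy does not dissipate at time `t`
exactly when `v t = 0`. -/
theorem caratheodory_sleigh_energy_dissipation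
    (m J₀ k ξ η J : ℝ) (hm : 0 < m) (hJ₀ : 0 < J₀) (hk : 0 < k)
    (hJ : J = J₀ + m * (ξ ^ 2 + η ^ 2))
    (u v ω : ℝ → ℝ)
    (hu : Differentiable ℝ u) (hv : Differentiable ℝ v) (hω : Differentiable ℝ ω)
    (heq1 : ∀ t : ℝ, deriv u t - η * deriv ω t = ω t * v t + ξ * ω t ^ 2)
    (heq2 : ∀ t : ℝ,
      deriv v t + ξ * deriv ω t = -(ω t * u t) + η * ω t ^ 2 - k / m * v t)
    (heq3 : ∀ t : ℝ,
      J / m * deriv ω t + ξ * deriv v t - η * deriv u t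
        = -(ω t * (ξ * u t + η * v t))) :
    (∀ t : ℝ,
      deriv (fun s =>
        m / 2 * ((u s - ω s * η) ^ 2 + (v s + ω s * ξ) ^ 2) + J₀ / 2 * ω s ^ 2) t
        = -(k * v t ^ 2)) ∧
    Antitone (fun s =>
      m / 2 * ((u s - ω s * η) ^ 2 + (v s + ω s * ξ) ^ 2) + J₀ / 2 * ω s ^ 2) ∧
    (∀ t : ℝ,
      deriv (fun s =>
        m / 2 * ((u s - ω s * η) ^ 2 + (v s + ω s * ξ) ^ 2) + J₀ / 2 * ω s ^ 2) t = 0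
        ↔ v t = 0) := by
  set T : ℝ → ℝ := fun s =>
    m / 2 * ((u s - ω s * η) ^ 2 + (v s + ω s * ξ) ^ 2) + J₀ / 2 * ω s ^ 2 with hT
  have hderiv : ∀ t : ℝ, deriv T t = -(k * v t ^ 2) := by
    intro t
    have h1 : HasDerivAt (fun s => u s - ω s * η)
        (deriv u t - deriv ω t * η) t :=
      (hu t).hasDerivAt.sub ((hω t).hasDerivAt.mul_const η)
    have h2 : HasDerivAt (fun s => v s + ω s * ξ)
        (deriv v t + deriv ω t * ξ) t :=
      (hv t).hasDerivAt.add ((hω t).hasDerivAt.mul_const ξ)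
    have hDT : HasDerivAt T
        (m / 2 * (2 * (u t - ω t * η) ^ 1 * (deriv u t - deriv ω t * η)
          + 2 * (v t + ω t * ξ) ^ 1 * (deriv v t + deriv ω t * ξ))
          + J₀ / 2 * (2 * ω t ^ 1 * deriv ω t)) t := by
      exact (((h1.pow 2).add (h2.pow 2)).const_mul (m / 2)).add
        (((hω t).hasDerivAt.pow 2).const_mul (J₀ / 2))
    rw [hDT.deriv]
    have e1 := heq1 t
    have e2 := heq2 t
    have e3 := heq3 t
    have hm' : m ≠ 0 := ne_of_gt hm
    have e2' : m * deriv v t + m * ξ * deriv ω t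
        = m * (-(ω t * u t) + η * ω t ^ 2) - k * v t := by
      field_simp at e2 ⊢
      linarith [e2]
    have e3' : J * deriv ω t + m * ξ * deriv v t - m * η * deriv u t
        = -(m * ω t * (ξ * u t + η * v t)) := by
      field_simp at e3 ⊢
      linarith [e3]
    rw [hJ] at e3'
    linear_combination (m * u t) * e1 + v t * e2' + ω t * e3'
  have hTdiff : Differentiable ℝ T := by
    apply Differentiable.add
    · exact (((hu.sub (hω.mul_const η)).pow 2).add
        ((hv.add (hω.mul_const ξ)).pow 2)).const_mul (m / 2)
    · exact (hω.pow 2).const_mul (J₀ / 2)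
  refine ⟨hderiv, ?_, ?_⟩
  · apply antitone_of_deriv_nonpos hTdiff
    intro t
    rw [hderiv t]
    nlinarith [sq_nonneg (v t), hk.le]
  · intro t
    rw [hderiv t]
    constructor
    · intro h
      have : v t ^ 2 = 0 := by nlinarith
      exact pow_eq_zero_iff (n := 2) (by norm_num) |>.mp this
    · intro h; rw [h]; ring
end

section
/- Let m > 0, J₀ > 0, k > 0, and ξ, u₀ ∈ ℝ with ξu₀ > 0. Then every complex root z of the quadratic polynomial z² + (k(J₀ + mξ²)/(mJ₀))·z + ξu₀k/J₀ has strictly negative real part. Consequently, all nonzero roots of the characteristic polynomial λ·(λ² + (k(J₀+mξ²)/(mJ₀))λ + ξu₀k/J₀) of the linearized viscous-friction system at the rectilinear motion u = u₀, v = 0, ω = 0 lie in the open left half-plane, so the rectilinear motion with the center of mass outstripping the contact point is stable. -/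
/-- Auxiliary: roots of a monic quadratic with positive coefficients lie in
the open left half-plane. -/
lemma quad_root_re_neg (b c : ℝ) (hb : 0 < b) (hc : 0 < c) (z : ℂ)
    (hz : z ^ 2 + (b : ℂ) * z + (c : ℂ) = 0) : z.re < 0 := by
  obtain ⟨x, y⟩ := z
  have hre := congrArg Complex.re hz
  have him := congrArg Complex.im hz
  simp [Complex.ext_iff, pow_two, Complex.mul_re, Complex.mul_im] at hre him
  -- him : y * (2x + b) = 0 alike
  rcases eq_or_ne y 0 with hy | hy
  · subst hy
    simp at hre
    -- x^2 + b x + c = 0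
    by_contra hx
    push_neg at hx
    nlinarith
  · have h2 : x + x + b = 0 := by
      rcases mul_eq_zero.mp (show y * (x + x + b) = 0 by linarith [him]) with h | h
      · exact absurd h hy
      · exact h
    show x < 0
    linarith
/-- Stability of rectilinear motion with `ξu₀ > 0` in the
viscous-friction model of the Chaplygin sleigh.  Every complex root of
`z² + (k(J₀ + mξ²)/(mJ₀)) z + ξu₀k/J₀` has strictly negative real part;
consequently all nonzero roots of the characteristic polynomial
`λ (λ² + (k(J₀ + mξ²)/(mJ₀)) λ + ξu₀k/J₀)` of the linearization at the rectilinear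
motion lie in the open left half-plane, so this steady motion (center of mass
outstripping the contact point) is stable. -/
theorem caratheodory_sleigh_roots_left_half_plane
    (m J₀ k ξ u₀ : ℝ) (hm : 0 < m) (hJ₀ : 0 < J₀) (hk : 0 < k)
    (h : 0 < ξ * u₀) :
    (∀ z : ℂ,
      z ^ 2 + (↑(k * (J₀ + m * ξ ^ 2) / (m * J₀)) : ℂ) * z
          + (↑(ξ * u₀ * k / J₀) : ℂ) = 0 → z.re < 0) ∧
    (∀ z : ℂ, z ≠ 0 →
      z * (z ^ 2 + (↑(k * (J₀ + m * ξ ^ 2) / (m * J₀)) : ℂ) * z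
          + (↑(ξ * u₀ * k / J₀) : ℂ)) = 0 → z.re < 0) := by
  have hb : 0 < k * (J₀ + m * ξ ^ 2) / (m * J₀) := by positivity
  have hc : 0 < ξ * u₀ * k / J₀ := by positivity
  refine ⟨fun z hz => quad_root_re_neg _ _ hb hc z hz, fun z hz0 hz => ?_⟩
  rcases mul_eq_zero.mp hz with h | h
  · exact absurd h hz0
  · exact quad_root_re_neg _ _ hb hc z h
end

section
/- Let m > 0, J₀ > 0, k > 0, and ξ, u₀ ∈ ℝ with ξu₀ < 0. Then the quadratic polynomial z² + (k(J₀ + mξ²)/(mJ₀))·z + ξu₀k/J₀ has a real root z > 0. Consequently the characteristic polynomial of the linearized viscous-friction system at the rectilinear motion u = u₀, v = 0, ω = 0 has a real positive root, so this steady motion (with the contact point outstripping the center of mass) is unstable. -/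
/-- Instability of rectilinear motion with `ξu₀ < 0` in the
viscous-friction model of the Chaplygin sleigh.  The quadratic polynomial
`z² + (k(J₀ + mξ²)/(mJ₀)) z + ξu₀k/J₀` has a real root `z > 0`; consequently the
characteristic polynomial `λ (λ² + (k(J₀ + mξ²)/(mJ₀)) λ + ξu₀k/J₀)` of the
linearization at the rectilinear motion has a real positive root, so this steady
motion (contact point outstripping the center of mass) is unstable. -/
theorem caratheodory_sleigh_positive_root
    (m J₀ k ξ u₀ : ℝ) (hm : 0 < m) (hJ₀ : 0 < J₀) (hk : 0 < k)
    (h : ξ * u₀ < 0) :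
    ∃ z : ℝ, 0 < z ∧
      z ^ 2 + k * (J₀ + m * ξ ^ 2) / (m * J₀) * z + ξ * u₀ * k / J₀ = 0 ∧
      z * (z ^ 2 + k * (J₀ + m * ξ ^ 2) / (m * J₀) * z + ξ * u₀ * k / J₀) = 0 := by
  set b : ℝ := k * (J₀ + m * ξ ^ 2) / (m * J₀) with hb
  set c : ℝ := ξ * u₀ * k / J₀ with hc
  have hbpos : 0 ≤ b := by
    apply div_nonneg
    · positivity
    · positivity
  have hcneg : c < 0 := div_neg_of_neg_of_pos (by nlinarith) hJ₀
  have hdisc : 0 < b ^ 2 - 4 * c := by nlinarith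
  set s : ℝ := Real.sqrt (b ^ 2 - 4 * c) with hs
  have hs2 : s ^ 2 = b ^ 2 - 4 * c := Real.sq_sqrt hdisc.le
  have hspos : b < s := by
    nlinarith [Real.sqrt_nonneg (b ^ 2 - 4 * c)]
  refine ⟨(-b + s) / 2, by linarith, ?_, ?_⟩
  · nlinarith
  · have : ((-b + s) / 2) ^ 2 + b * ((-b + s) / 2) + c = 0 := by nlinarith
    rw [this, mul_zero]
end

section
/- Let m > 0, J₀ > 0, and ξ, u₀ ∈ ℝ with ξu₀ ≠ 0, and set J = J₀ + mξ². For k > 0 put b(k) = kJ/(mJ₀) and c(k) = kξu₀/J₀. Then for all sufficiently large k the discriminant b(k)² − 4c(k) is positive, and the two real roots λ₂(k) = (−b(k) + √(b(k)² − 4c(k)))/2 and λ₃(k) = (−b(k) − √(b(k)² − 4c(k)))/2 of z² + b(k)z + c(k) satisfy λ₂(k) → −mξu₀/(J₀ + mξ²) and λ₃(k)/k → −(J₀ + mξ²)/(J₀ m) as k → ∞. Thus in the limit of large friction coefficient one eigenvalue decreases without bound while the other converges to the eigenvalue −mξu₀/(J₀+mξ²) of the steady-state solutions of the nonholonomic Chaplygin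 sleigh. -/
open Filter Topology

/-!
Both coefficients of `z² + b(k) z + c(k)` are linear in `k`: `b(k) = kα`, `c(k) = kβ` with
`α = J/(mJ₀) > 0` and `β = ξu₀/J₀`. Hence `√(b² − 4c) = k √(α² − 4β/k)` for `k > 0`, and
`√(α² − 4β/k) → α`. The large root divided by `k` is `(−α − √(α² − 4β/k))/2 → −α`; the small
root, after rationalizing, is `−2β/(α + √(α² − 4β/k)) → −β/α`.
-/

theorem sq_add_mul_add_eq_zero_of_eq_quadratic_root {b c z : ℝ} (hD : 0 ≤ b ^ 2 - 4 * c)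
    (hz : z = (-b + √(b ^ 2 - 4 * c)) / 2 ∨ z = (-b - √(b ^ 2 - 4 * c)) / 2) :
    z ^ 2 + b * z + c = 0 := by
  have hdiscrim : discrim 1 b c = √(b ^ 2 - 4 * c) * √(b ^ 2 - 4 * c) := by
    rw [Real.mul_self_sqrt hD, discrim, mul_one]
  have := (quadratic_eq_zero_iff one_ne_zero hdiscrim z).mpr (by simpa using hz)
  linear_combination this

namespace LinearQuadraticFamily

variable {α β : ℝ}

theorem discrim_eq {k : ℝ} (hk : k ≠ 0) :
    (k * α) ^ 2 - 4 * (k * β) = k ^ 2 * (α ^ 2 - 4 * β / k) := by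
  field_simp

variable (α β) in
theorem tendsto_sq_sub_div : Tendsto (fun k : ℝ => α ^ 2 - 4 * β / k) atTop (𝓝 (α ^ 2)) := by
  have h : Tendsto (fun k : ℝ => α ^ 2 - 4 * β / k) atTop (𝓝 (α ^ 2 - 0)) :=
    tendsto_const_nhds.sub (tendsto_const_nhds.div_atTop tendsto_id)
  rwa [sub_zero] at h

theorem eventually_sq_sub_div_pos (hα : α ≠ 0) : ∀ᶠ k in atTop, 0 < α ^ 2 - 4 * β / k :=
  (tendsto_sq_sub_div α β).eventually (lt_mem_nhds (by positivity))

theorem eventually_discrim_pos (hα : α ≠ 0) :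
    ∀ᶠ k in atTop, 0 < (k * α) ^ 2 - 4 * (k * β) := by
  filter_upwards [eventually_gt_atTop 0, eventually_sq_sub_div_pos hα] with k hk hpos
  rw [discrim_eq hk.ne']
  positivity

theorem sqrt_discrim_eq {k : ℝ} (hk : 0 < k) :
    √((k * α) ^ 2 - 4 * (k * β)) = k * √(α ^ 2 - 4 * β / k) := by
  rw [discrim_eq hk.ne', Real.sqrt_mul (sq_nonneg k), Real.sqrt_sq hk.le]

variable (β) in
theorem tendsto_sqrt_sq_sub_div (hα : 0 ≤ α) :
    Tendsto (fun k : ℝ => √(α ^ 2 - 4 * β / k)) atTop (𝓝 α) := by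
  simpa [Real.sqrt_sq hα] using (tendsto_sq_sub_div α β).sqrt

theorem tendsto_small_root (hα : 0 < α) :
    Tendsto (fun k : ℝ => (-(k * α) + √((k * α) ^ 2 - 4 * (k * β))) / 2) atTop
      (𝓝 (-β / α)) := by
  have hlim : Tendsto (fun k : ℝ => -2 * β / (α + √(α ^ 2 - 4 * β / k))) atTop
      (𝓝 (-2 * β / (α + α))) :=
    tendsto_const_nhds.div (tendsto_const_nhds.add (tendsto_sqrt_sq_sub_div β hα.le))
      (by positivity)
  have hrationalize : (fun k : ℝ => -2 * β / (α + √(α ^ 2 - 4 * β / k))) =ᶠ[atTop]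
      fun k => (-(k * α) + √((k * α) ^ 2 - 4 * (k * β))) / 2 := by
    filter_upwards [eventually_gt_atTop 0, eventually_sq_sub_div_pos (β := β) hα.ne']
      with k hk hpos
    set s := √(α ^ 2 - 4 * β / k)
    have hs : k * s ^ 2 = k * α ^ 2 - 4 * β := by
      rw [Real.sq_sqrt hpos.le]
      field_simp
    have hden : 0 < α + s := by positivity
    rw [sqrt_discrim_eq hk, div_eq_div_iff hden.ne' two_ne_zero]
    linear_combination -hs
  convert hlim.congr' hrationalize using 2
  field_simp
  ring

theorem tendsto_large_root_div (hα : 0 < α) :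
    Tendsto (fun k : ℝ => (-(k * α) - √((k * α) ^ 2 - 4 * (k * β))) / 2 / k) atTop
      (𝓝 (-α)) := by
  have hlim : Tendsto (fun k : ℝ => (-α - √(α ^ 2 - 4 * β / k)) / 2) atTop
      (𝓝 ((-α - α) / 2)) :=
    (tendsto_const_nhds.sub (tendsto_sqrt_sq_sub_div β hα.le)).div_const 2
  have heq : (fun k : ℝ => (-α - √(α ^ 2 - 4 * β / k)) / 2) =ᶠ[atTop]
      fun k => (-(k * α) - √((k * α) ^ 2 - 4 * (k * β))) / 2 / k := by
    filter_upwards [eventually_gt_atTop 0] with k hk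
    rw [sqrt_discrim_eq hk]
    field_simp
  convert hlim.congr' heq using 2
  ring

end LinearQuadraticFamily

open LinearQuadraticFamily in
theorem caratheodory_sleigh_large_friction_limit_general
    (m J₀ ξ u₀ J : ℝ) (hm : 0 < m) (hJ₀ : 0 < J₀)
    (hJ : J = J₀ + m * ξ ^ 2)
    (b c l₂ l₃ : ℝ → ℝ)
    (hb : ∀ k : ℝ, b k = k * J / (m * J₀))
    (hc : ∀ k : ℝ, c k = k * ξ * u₀ / J₀)
    (hl₂ : ∀ k : ℝ, l₂ k = (-b k + Real.sqrt (b k ^ 2 - 4 * c k)) / 2)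
    (hl₃ : ∀ k : ℝ, l₃ k = (-b k - Real.sqrt (b k ^ 2 - 4 * c k)) / 2) :
    (∀ᶠ k in atTop, 0 < b k ^ 2 - 4 * c k) ∧
    (∀ᶠ k in atTop, ∀ z : ℝ, (z = l₂ k ∨ z = l₃ k) → z ^ 2 + b k * z + c k = 0) ∧
    Tendsto l₂ atTop (nhds (-(m * ξ * u₀ / (J₀ + m * ξ ^ 2)))) ∧
    Tendsto (fun k => l₃ k / k) atTop (nhds (-((J₀ + m * ξ ^ 2) / (J₀ * m)))) := by
  subst hJ
  set α := (J₀ + m * ξ ^ 2) / (m * J₀)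
  set β := ξ * u₀ / J₀
  have hα : 0 < α := by positivity
  obtain rfl : b = fun k => k * α := funext fun k => by rw [hb]; ring
  obtain rfl : c = fun k => k * β := funext fun k => by rw [hc]; ring
  obtain rfl := funext hl₂
  obtain rfl := funext hl₃
  refine ⟨eventually_discrim_pos hα.ne', ?_, ?_, ?_⟩
  · filter_upwards [eventually_discrim_pos (β := β) hα.ne'] with k hD z hz
    exact sq_add_mul_add_eq_zero_of_eq_quadratic_root hD.le hz
  · convert tendsto_small_root (β := β) hα using 2
    simp only [α, β]
    field_simp
  · convert tendsto_large_root_div (β := β) hα using 2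
    ring

/-- Large-friction asymptotics of the eigenvalues of the
linearized viscous-friction model of the Chaplygin sleigh (`η = 0`) at the
rectilinear motion.  With `J = J₀ + mξ²`, `b(k) = kJ/(mJ₀)`, `c(k) = kξu₀/J₀`,
for all sufficiently large `k` the discriminant `b(k)² − 4c(k)` is positive, and
the two real roots `λ₂(k) = (−b(k) + √(b(k)² − 4c(k)))/2` and
`λ₃(k) = (−b(k) − √(b(k)² − 4c(k)))/2` of `z² + b(k)z + c(k)` satisfy
`λ₂(k) → −mξu₀/(J₀ + mξ²)` and `λ₃(k)/k → −(J₀ + mξ²)/(J₀ m)` as `k → ∞`. -/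
theorem caratheodory_sleigh_large_friction_limit
    (m J₀ ξ u₀ J : ℝ) (hm : 0 < m) (hJ₀ : 0 < J₀) (hξu : ξ * u₀ ≠ 0)
    (hJ : J = J₀ + m * ξ ^ 2)
    (b c l₂ l₃ : ℝ → ℝ)
    (hb : ∀ k : ℝ, b k = k * J / (m * J₀))
    (hc : ∀ k : ℝ, c k = k * ξ * u₀ / J₀)
    (hl₂ : ∀ k : ℝ, l₂ k = (-b k + Real.sqrt (b k ^ 2 - 4 * c k)) / 2)
    (hl₃ : ∀ k : ℝ, l₃ k = (-b k - Real.sqrt (b k ^ 2 - 4 * c k)) / 2) :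
    (∀ᶠ k in atTop, 0 < b k ^ 2 - 4 * c k) ∧
    (∀ᶠ k in atTop, ∀ z : ℝ, (z = l₂ k ∨ z = l₃ k) → z ^ 2 + b k * z + c k = 0) ∧
    Tendsto l₂ atTop (nhds (-(m * ξ * u₀ / (J₀ + m * ξ ^ 2)))) ∧
    Tendsto (fun k => l₃ k / k) atTop (nhds (-((J₀ + m * ξ ^ 2) / (J₀ * m)))) :=
  caratheodory_sleigh_large_friction_limit_general m J₀ ξ u₀ J hm hJ₀ hJ b c l₂ l₃ hb hc hl₂ hl₃
end
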